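/- arXiv:math/0405543 — 6 statements merged into one kernel-verified Lean document; each statement's English description precedes it below -/
import Mathlib

section
/- The Carlitz polynomial e_i(t) = ∏_{m ∈ F_q[x], deg m < i} (t - m) (with e_0(t) = t) satisfies the expansion e_i(t) = Σ_{j=0}^{i} (-1)^{i-j} (D_i / (D_j L_{i-j}^{q^j})) t^{q^j}. -/
/-!
Let `E_n` be the right-hand side. Splitting off the top coefficient of `m` gives
`e_{n+1}(t) = ∏_{a ∈ F_q} e_n(t - a x^n)`. The coefficients of `E_n` satisfy
`E_{n+1} = E_n^q - D_n^{q-1} E_n` and `E_{n+1}(x y) = x E_{n+1}(y) + [n+1] E_n(y)^q`, which give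
`E_n(x^n) = D_n` by induction. As a sum of Frobenius powers, `E_n` is `F_q`-linear, so inductively
`e_{n+1} = ∏_a (E_n - a D_n) = E_n^q - D_n^{q-1} E_n = E_{n+1}`, the middle step being
`∏_{a ∈ F_q} (T - a) = T^q - T`.
-/
noncomputable section

/-- `[i] = x^{q^i} - x`. -/
def brk {K : Type*} [CommRing K] (q : ℕ) (x : K) (i : ℕ) : K := x ^ q ^ i - x

/-- Carlitz factorial: `D_0 = 1`, `D_i = [i] D_{i-1}^q`. -/
def Dfac {K : Type*} [CommRing K] (q : ℕ) (x : K) : ℕ → K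
  | 0 => 1
  | i + 1 => brk q x (i + 1) * (Dfac q x i) ^ q

/-- `L_0 = 1`, `L_i = [i] L_{i-1}`. -/
def Lfac {K : Type*} [CommRing K] (q : ℕ) (x : K) : ℕ → K
  | 0 => 1
  | i + 1 => brk q x (i + 1) * Lfac q x i

/-- The Carlitz polynomial `e_i(t) = ∏_{m ∈ F_q[x], deg m < i} (t - m)`, the product being
over all polynomials `m` of degree `< i` (encoded by their coefficient tuples `c : Fin i → F`),
viewed as a polynomial in `t` over a field `K` containing `F` with a distinguished element `x`. -/
def carlitzE (F : Type*) [Field F] [Fintype F] {K : Type*} [Field K] [Algebra F K]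
    (x : K) (i : ℕ) : Polynomial K :=
  ∏ c : Fin i → F,
    (Polynomial.X - Polynomial.C (∑ j : Fin i, algebraMap F K (c j) * x ^ (j : ℕ)))

open Polynomial

section Frobenius

variable (F : Type*) {L : Type*} [Field F] [Fintype F] [CommRing L] [Algebra F L]

local notation "q" => Fintype.card F

theorem frobeniusAlgHom_pow_apply (j : ℕ) (a : L) :
    (FiniteField.frobeniusAlgHom F L ^ j) a = a ^ q ^ j := by
  rw [AlgHom.coe_pow, FiniteField.coe_frobeniusAlgHom, pow_iterate]

theorem sub_pow_card_pow (a b : L) (j : ℕ) : (a - b) ^ q ^ j = a ^ q ^ j - b ^ q ^ j := by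
  simpa only [frobeniusAlgHom_pow_apply] using map_sub (FiniteField.frobeniusAlgHom F L ^ j) a b

theorem sum_pow_card {ι : Type*} (s : Finset ι) (f : ι → L) :
    (∑ i ∈ s, f i) ^ q = ∑ i ∈ s, f i ^ q :=
  map_sum (FiniteField.frobeniusAlgHom F L) f s

theorem neg_one_pow_pow_card (m : ℕ) : ((-1 : L) ^ m) ^ q = (-1) ^ m := by
  rw [← pow_mul, mul_comm, pow_mul, ← FiniteField.frobeniusAlgHom_apply F, map_neg, map_one]

variable {F} in
theorem smul_pow_card_pow (a : F) (b : L) (j : ℕ) : (a • b) ^ q ^ j = a • b ^ q ^ j := by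
  simpa only [frobeniusAlgHom_pow_apply] using map_smul (FiniteField.frobeniusAlgHom F L ^ j) a b

theorem Polynomial.sum_C_mul_X_pow_card_pow_comp_X_sub_C (s : Finset ℕ) (c : ℕ → L) (b : L) :
    (∑ j ∈ s, C (c j) * X ^ q ^ j).comp (X - C b)
      = ∑ j ∈ s, C (c j) * X ^ q ^ j - C ((∑ j ∈ s, C (c j) * X ^ q ^ j).eval b) := by
  simp only [sum_comp, mul_comp, C_comp, pow_comp, X_comp, sub_pow_card_pow, eval_finsetSum,
    eval_mul, eval_C, eval_pow, eval_X, map_sum, ← C_pow, mul_sub, C_mul, Finset.sum_sub_distrib]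

variable {F} in
theorem Polynomial.eval_smul_sum_C_mul_X_pow_card_pow (s : Finset ℕ) (c : ℕ → L) (a : F)
    (y : L) : (∑ j ∈ s, C (c j) * X ^ q ^ j).eval (a • y)
      = a • (∑ j ∈ s, C (c j) * X ^ q ^ j).eval y := by
  simp only [eval_finsetSum, eval_mul, eval_C, eval_pow, eval_X, smul_pow_card_pow,
    Finset.smul_sum, mul_smul_comm]

theorem prod_X_sub_C_eq_X_pow_card_sub_X : ∏ a : F, (X - C a) = X ^ q - X := by
  have h := prod_multiset_X_sub_C_of_monic_of_roots_card_eq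
    (monic_X_pow_sub (p := (X : F[X])) (by simpa using Fintype.one_lt_card (α := F)))
    (by rw [FiniteField.roots_X_pow_card_sub_X,
      FiniteField.X_pow_card_sub_X_natDegree_eq F Fintype.one_lt_card]; rfl)
  rwa [FiniteField.roots_X_pow_card_sub_X] at h

end Frobenius

def carlitzCoeff {K : Type*} [Field K] (q : ℕ) (x : K) (n j : ℕ) : K :=
  (-1) ^ (n - j) * Dfac q x n / (Dfac q x j * Lfac q x (n - j) ^ q ^ j)

def carlitzExpansion {K : Type*} [Field K] (q : ℕ) (x : K) (n : ℕ) : K[X] :=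
  ∑ j ∈ Finset.range (n + 1), C (carlitzCoeff q x n j) * X ^ q ^ j

section Carlitz

variable {F K : Type*} [Field F] [Fintype F] [Field K] [Algebra F K] {x : K}

local notation "q" => Fintype.card F

theorem prod_sub_C_smul (P : K[X]) (d : K) :
    ∏ a : F, (P - C (a • d)) = P ^ q - C (d ^ (q - 1)) * P := by
  rcases eq_or_ne d 0 with rfl | hd
  · simp [zero_pow (Nat.sub_ne_zero_of_lt Fintype.one_lt_card)]
  have h := congrArg (aeval (C d⁻¹ * P)) (prod_X_sub_C_eq_X_pow_card_sub_X F)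
  simp only [map_prod, map_sub, map_pow, aeval_X, aeval_C] at h
  calc ∏ a : F, (P - C (a • d))
      = ∏ a : F, (C d * (C d⁻¹ * P - algebraMap F K[X] a)) := by
        refine Finset.prod_congr rfl fun a _ => ?_
        rw [mul_sub, ← mul_assoc, ← C_mul, mul_inv_cancel₀ hd, C_1, one_mul,
          Polynomial.algebraMap_apply, ← C_mul, Algebra.smul_def, mul_comm]
    _ = C d ^ q * ((C d⁻¹ * P) ^ q - C d⁻¹ * P) := by
      rw [Finset.prod_mul_distrib, Finset.prod_const, Finset.card_univ, h]
    _ = P ^ q - C (d ^ (q - 1)) * P := by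
      rw [mul_sub, mul_pow, ← mul_assoc, ← mul_assoc, ← C_pow, ← C_pow, ← C_mul, ← C_mul,
        ← mul_pow, mul_inv_cancel₀ hd, one_pow, C_1, one_mul, pow_sub₀ d hd Fintype.card_pos,
        pow_one]

theorem brk_ne_zero (hx : Transcendental F x) {i : ℕ} (hi : i ≠ 0) : brk q x i ≠ 0 := by
  rw [brk, sub_ne_zero]
  intro h
  exact hx ⟨X ^ q ^ i - X, FiniteField.X_pow_card_pow_sub_X_ne_zero F hi Fintype.one_lt_card,
    by simp [h]⟩

theorem Dfac_ne_zero (hx : Transcendental F x) (n : ℕ) : Dfac q x n ≠ 0 := by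
  induction n with
  | zero => exact one_ne_zero
  | succ n ih => exact mul_ne_zero (brk_ne_zero hx n.succ_ne_zero) (pow_ne_zero _ ih)

theorem Lfac_ne_zero (hx : Transcendental F x) (n : ℕ) : Lfac q x n ≠ 0 := by
  induction n with
  | zero => exact one_ne_zero
  | succ n ih => exact mul_ne_zero (brk_ne_zero hx n.succ_ne_zero) ih

variable (F) in
theorem brk_add (u v : ℕ) : brk q x (u + v) = brk q x u + brk q x v ^ q ^ u := by
  rw [brk, brk, brk, sub_pow_card_pow, ← pow_mul, ← pow_add, add_comm v]
  ring

theorem carlitzCoeff_self (hx : Transcendental F x) (n : ℕ) : carlitzCoeff q x n n = 1 := by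
  simp [carlitzCoeff, Lfac, Dfac_ne_zero hx]

theorem carlitzCoeff_succ_zero (hx : Transcendental F x) (n : ℕ) :
    carlitzCoeff q x (n + 1) 0 = -(Dfac q x n ^ (q - 1) * carlitzCoeff q x n 0) := by
  have hb := brk_ne_zero hx n.succ_ne_zero
  have hL := Lfac_ne_zero hx n
  simp only [carlitzCoeff, Nat.sub_zero, Dfac, Lfac, pow_zero, pow_one, one_mul]
  rw [← pow_sub_one_mul Fintype.card_ne_zero (Dfac q x n)]
  field_simp
  ring

theorem brk_mul_carlitzCoeff_succ_succ (hx : Transcendental F x) (n j : ℕ) :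
    brk q x (j + 1) * carlitzCoeff q x (n + 1) (j + 1)
      = brk q x (n + 1) * carlitzCoeff q x n j ^ q := by
  have hb := brk_ne_zero hx j.succ_ne_zero
  have hL := Lfac_ne_zero hx (n - j)
  have hD := Dfac_ne_zero hx j
  simp only [carlitzCoeff, Nat.add_sub_add_right, Dfac, div_pow, mul_pow, neg_one_pow_pow_card]
  simp only [← pow_mul, ← pow_succ]
  field_simp

theorem carlitzCoeff_succ_succ (hx : Transcendental F x) {n j : ℕ} (hj : j < n) :
    carlitzCoeff q x n j ^ q - Dfac q x n ^ (q - 1) * carlitzCoeff q x n (j + 1)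
      = carlitzCoeff q x (n + 1) (j + 1) := by
  obtain ⟨m, rfl⟩ : ∃ m, n = j + 1 + m := ⟨n - (j + 1), by omega⟩
  have hb := brk_ne_zero hx j.succ_ne_zero
  have hb' := brk_ne_zero hx m.succ_ne_zero
  have hL := Lfac_ne_zero hx m
  have hD := Dfac_ne_zero hx j
  have hsplit : brk q x (j + 1 + m + 1) = brk q x (j + 1) + brk q x (m + 1) ^ q ^ (j + 1) := by
    rw [add_assoc, brk_add]
  have hm : j + 1 + m - j = m + 1 := by omega
  simp only [carlitzCoeff, hm, Nat.add_sub_cancel_left, Nat.add_sub_add_right, Dfac, Lfac, hsplit,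
    div_pow, mul_pow, neg_one_pow_pow_card]
  simp only [← pow_mul, ← pow_succ]
  rw [← pow_sub_one_mul Fintype.card_ne_zero (Dfac q x (j + 1 + m))]
  field_simp
  ring

theorem carlitzExpansion_zero (hx : Transcendental F x) : carlitzExpansion q x 0 = X := by
  simp [carlitzExpansion, carlitzCoeff_self hx]

theorem carlitzExpansion_succ (hx : Transcendental F x) (n : ℕ) :
    carlitzExpansion q x (n + 1)
      = carlitzExpansion q x n ^ q - C (Dfac q x n ^ (q - 1)) * carlitzExpansion q x n := by
  have hpow : carlitzExpansion q x n ^ q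
      = ∑ j ∈ Finset.range (n + 1), C (carlitzCoeff q x n j ^ q) * X ^ q ^ (j + 1) := by
    simp only [carlitzExpansion, sum_pow_card, mul_pow, ← C_pow, ← pow_mul, ← pow_succ]
  have hmid : ∀ j ∈ Finset.range n, C (carlitzCoeff q x (n + 1) (j + 1)) * X ^ q ^ (j + 1)
      = C (carlitzCoeff q x n j ^ q) * X ^ q ^ (j + 1)
        - C (Dfac q x n ^ (q - 1)) * (C (carlitzCoeff q x n (j + 1)) * X ^ q ^ (j + 1)) := by
    intro j hj
    rw [← carlitzCoeff_succ_succ hx (Finset.mem_range.1 hj), C_sub, C_mul]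
    ring
  -- split off the `X` term and the `X ^ q ^ (n + 1)` term of each sum
  rw [hpow, carlitzExpansion, carlitzExpansion, Finset.mul_sum, Finset.sum_range_succ',
    Finset.sum_range_succ, Finset.sum_congr rfl hmid, Finset.sum_range_succ _ n,
    Finset.sum_range_succ' _ n, carlitzCoeff_succ_zero hx, carlitzCoeff_self hx,
    carlitzCoeff_self hx, one_pow, Finset.sum_sub_distrib, C_neg, C_mul]
  ring

theorem eval_mul_carlitzExpansion_succ (hx : Transcendental F x) (n : ℕ) (y : K) :
    (carlitzExpansion q x (n + 1)).eval (x * y)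
      = x * (carlitzExpansion q x (n + 1)).eval y
        + brk q x (n + 1) * (carlitzExpansion q x n).eval y ^ q := by
  have hterm : ∀ j, carlitzCoeff q x (n + 1) j * (x * y) ^ q ^ j
      = x * (carlitzCoeff q x (n + 1) j * y ^ q ^ j)
        + brk q x j * carlitzCoeff q x (n + 1) j * y ^ q ^ j := by
    intro j
    rw [mul_pow, brk]
    ring
  have hshift : ∀ j ∈ Finset.range (n + 1),
      brk q x (j + 1) * carlitzCoeff q x (n + 1) (j + 1) * y ^ q ^ (j + 1)
        = brk q x (n + 1) * (carlitzCoeff q x n j * y ^ q ^ j) ^ q := by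
    intro j _
    rw [brk_mul_carlitzCoeff_succ_succ hx, mul_pow, ← pow_mul, ← pow_succ, mul_assoc]
  simp only [carlitzExpansion, eval_finsetSum, eval_mul, eval_C, eval_pow, eval_X, hterm,
    Finset.sum_add_distrib, ← Finset.mul_sum]
  rw [Finset.sum_range_succ' (fun j => brk q x j * _ * _), Finset.sum_congr rfl hshift,
    ← Finset.mul_sum, sum_pow_card]
  simp [brk]

theorem eval_carlitzExpansion_pow_self (hx : Transcendental F x) (n : ℕ) :
    (carlitzExpansion q x n).eval (x ^ n) = Dfac q x n := by
  induction n with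
  | zero => simp [carlitzExpansion_zero hx, Dfac]
  | succ n ih =>
    have hroot : (carlitzExpansion q x (n + 1)).eval (x ^ n) = 0 := by
      rw [carlitzExpansion_succ hx, eval_sub, eval_mul, eval_pow, eval_C, ih,
        pow_sub_one_mul Fintype.card_ne_zero, sub_self]
    rw [pow_succ', eval_mul_carlitzExpansion_succ hx, hroot, ih, mul_zero, zero_add, Dfac]

theorem carlitzExpansion_comp_X_sub_C_smul (n : ℕ) (a : F) (y : K) :
    (carlitzExpansion q x n).comp (X - C (a • y))
      = carlitzExpansion q x n - C (a • (carlitzExpansion q x n).eval y) := by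
  rw [carlitzExpansion, sum_C_mul_X_pow_card_pow_comp_X_sub_C, eval_smul_sum_C_mul_X_pow_card_pow]

theorem carlitzE_succ (n : ℕ) :
    carlitzE F x (n + 1) = ∏ a : F, (carlitzE F x n).comp (X - C (a • x ^ n)) := by
  rw [carlitzE, ← (Fin.snocEquiv fun _ => F).prod_comp, Fintype.prod_prod_type]
  refine Finset.prod_congr rfl fun a _ => ?_
  rw [carlitzE, prod_comp]
  refine Finset.prod_congr rfl fun c _ => ?_
  simp [Fin.sum_univ_castSucc, Algebra.smul_def]
  ring

theorem carlitzE_eq_carlitzExpansion (hx : Transcendental F x) (n : ℕ) :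
    carlitzE F x n = carlitzExpansion q x n := by
  induction n with
  | zero => simp [carlitzE, carlitzExpansion_zero hx]
  | succ n ih =>
    simp only [carlitzE_succ, ih, carlitzExpansion_comp_X_sub_C_smul,
      eval_carlitzExpansion_pow_self hx]
    rw [prod_sub_C_smul, carlitzExpansion_succ hx]

end Carlitz

/-- `e_i(t) = Σ_{j=0}^{i} (-1)^{i-j} (D_i / (D_j L_{i-j}^{q^j})) t^{q^j}` over `F_q(x)`. -/
theorem carlitzE_expansion {F : Type*} [Field F] [Fintype F]
    (q : ℕ) (hq : q = Fintype.card F) (i : ℕ) :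
    carlitzE F (RatFunc.X : RatFunc F) i
      = ∑ j ∈ Finset.range (i + 1),
          Polynomial.C ((-1) ^ (i - j) * Dfac q (RatFunc.X : RatFunc F) i
              / (Dfac q (RatFunc.X : RatFunc F) j
                  * (Lfac q (RatFunc.X : RatFunc F) (i - j)) ^ q ^ j))
            * Polynomial.X ^ q ^ j := by
  subst hq
  exact carlitzE_eq_carlitzExpansion RatFunc.transcendental_X i
end
end

section
/- The Carlitz module polynomials C_s(z) = Σ_{i=0}^{deg s} (e_i(s)/D_i) z^{q^i}, for s ∈ F_q[x], satisfy C_{ts}(z) = C_t(C_s(z)) for all s, t ∈ F_q[x]. -/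
noncomputable section

/-- The Carlitz module: `C_s(z) = Σ_{i=0}^{deg s} (e_i(s)/D_i) z^{q^i}` for `s ∈ F_q[x]`,
a polynomial in `z` over `F_q(x)`. -/
def carlitzMod (F : Type*) [Field F] [Fintype F] (q : ℕ) (s : Polynomial F) :
    Polynomial (RatFunc F) :=
  ∑ i ∈ Finset.range (s.natDegree + 1),
    Polynomial.C
        ((carlitzE F (RatFunc.X : RatFunc F) i).eval
            (algebraMap (Polynomial F) (RatFunc F) s) / Dfac q (RatFunc.X : RatFunc F) i)
      * Polynomial.X ^ q ^ i

/-!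
Let `x` be transcendental over `F_q`. The roots of `e_i` are the `q^i` elements of the
`F_q`-space `V_i` of polynomials in `x` of degree `< i`, all simple, so a polynomial of degree
`≤ q^i` vanishing on `V_i` is a constant multiple of `e_i`. Applied to
`e_i(aT + v) - a e_i(T) - e_i(v)` this makes `e_i` `F_q`-linear. Applied to
`e_{i+1}(xT) - x e_{i+1}(T) - γ e_i(T)^q`, with `γ = e_{i+1}(x^{i+1}) / e_i(x^i)^q` so that it
vanishes on `V_{i+1}`, it gives a multiple of `e_{i+1}`; comparing coefficients of `T` (`e_i^q`
has none, `e_{i+1}` a nonzero one) shows the multiple is `0`, and the leading coefficients then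
give `γ = [i+1]`. Hence `D_i = e_i(x^i)` and `C_{xs} = x C_s + C_s^q = C_x ∘ C_s`; since
`s ↦ C_s` is `F_q`-linear, induction on `t` finishes.
-/

open Polynomial

namespace Polynomial

theorem natDegree_comp_C_mul_X_le {R : Type*} [CommSemiring R] (p : R[X]) (r : R) :
    (p.comp (C r * X)).natDegree ≤ p.natDegree :=
  natDegree_comp_le.trans (mul_le_of_le_one_right' ((natDegree_C_mul_le r X).trans natDegree_X_le))

theorem X_mul_mem_degreeLT {R : Type*} [Semiring R] {i : ℕ} {p : R[X]} (hp : p ∈ degreeLT R i) :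
    X * p ∈ degreeLT R (i + 1) := by
  rw [mem_degreeLT, degree_lt_iff_coeff_zero] at hp ⊢
  intro m hm
  obtain ⟨k, rfl⟩ := Nat.exists_eq_add_one.mpr (by omega : 0 < m)
  rw [coeff_X_mul]
  exact hp k (by omega)

theorem exists_mem_degreeLT_eq_add_C_mul_X_pow {R : Type*} [Ring R] {i : ℕ} {p : R[X]}
    (hp : p ∈ degreeLT R (i + 1)) : ∃ p' ∈ degreeLT R i, ∃ a : R, p = p' + C a * X ^ i := by
  refine ⟨p - C (p.coeff i) * X ^ i, ?_, p.coeff i, (sub_add_cancel _ _).symm⟩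
  rw [mem_degreeLT, degree_lt_iff_coeff_zero]
  intro m hm
  rw [mem_degreeLT] at hp
  rcases hm.eq_or_lt with rfl | hm
  · simp
  · rw [coeff_sub, coeff_C_mul_X_pow, if_neg hm.ne', sub_zero]
    exact coeff_eq_zero_of_degree_lt (hp.trans_le (by exact_mod_cast hm))

end Polynomial

section CarlitzPolynomials

variable {F K : Type*} [Field F] [Field K] [Algebra F K] {x : K}

theorem injective_aeval_degreeLTEquiv_symm (hx : Transcendental F x) (i : ℕ) :
    Function.Injective fun c : Fin i → F => aeval x ((degreeLTEquiv F i).symm c : F[X]) :=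
  (transcendental_iff_injective.mp hx).comp
    (Subtype.val_injective.comp (degreeLTEquiv F i).symm.injective)

variable [Fintype F]

local notation "q" => Fintype.card F

variable (F) in
theorem carlitzE_eq_prod (x : K) (i : ℕ) :
    carlitzE F x i
      = ∏ c : Fin i → F, (X - C (aeval x ((degreeLTEquiv F i).symm c : F[X]))) := by
  refine Finset.prod_congr rfl fun c _ => ?_
  simp [degreeLTEquiv, aeval_monomial]

theorem eval_carlitzE (i : ℕ) (u : K) :
    (carlitzE F x i).eval u
      = ∏ c : Fin i → F, (u - aeval x ((degreeLTEquiv F i).symm c : F[X])) := by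
  simp [carlitzE_eq_prod, eval_prod]

variable (x) in
theorem carlitzE_zero : carlitzE F x 0 = X := by
  simp [carlitzE]

variable (F) in
theorem monic_carlitzE (x : K) (i : ℕ) : (carlitzE F x i).Monic :=
  carlitzE_eq_prod F x i ▸ monic_prod_of_monic _ _ fun _ _ => monic_X_sub_C _

variable (F) in
theorem natDegree_carlitzE (x : K) (i : ℕ) : (carlitzE F x i).natDegree = q ^ i := by
  rw [carlitzE_eq_prod, natDegree_prod _ _ fun _ _ => X_sub_C_ne_zero _]
  simp

variable (x) in
theorem coeff_carlitzE_card_pow (i : ℕ) : (carlitzE F x i).coeff (q ^ i) = 1 := by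
  simpa [natDegree_carlitzE] using (monic_carlitzE F x i).coeff_natDegree

theorem eval_carlitzE_aeval {i : ℕ} {p : F[X]} (hp : p ∈ degreeLT F i) :
    (carlitzE F x i).eval (aeval x p) = 0 := by
  rw [eval_carlitzE]
  exact Finset.prod_eq_zero (Finset.mem_univ (degreeLTEquiv F i ⟨p, hp⟩)) (by simp)

variable (x) in
theorem eval_carlitzE_zero (i : ℕ) : (carlitzE F x i).eval 0 = 0 := by
  simpa using eval_carlitzE_aeval (x := x) (zero_mem (degreeLT F i))

theorem eval_carlitzE_add_aeval {i : ℕ} {p : F[X]} (hp : p ∈ degreeLT F i) (u : K) :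
    (carlitzE F x i).eval (u + aeval x p) = (carlitzE F x i).eval u := by
  rw [eval_carlitzE, eval_carlitzE]
  refine Fintype.prod_equiv (Equiv.subRight (degreeLTEquiv F i ⟨p, hp⟩)) _ _ fun c => ?_
  simp only [Equiv.subRight_apply, map_sub, LinearEquiv.symm_apply_apply, Submodule.coe_sub]
  ring

theorem eq_zero_of_natDegree_lt_of_eval_aeval_eq_zero (hx : Transcendental F x) {i : ℕ}
    {P : K[X]} (hdeg : P.natDegree < q ^ i) (hP : ∀ p ∈ degreeLT F i, P.eval (aeval x p) = 0) :
    P = 0 := by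
  refine P.eq_zero_of_natDegree_lt_card_of_eval_eq_zero (injective_aeval_degreeLTEquiv_symm hx i)
    (fun c => hP _ (Subtype.prop _)) ?_
  simpa [Fintype.card_fun] using hdeg

theorem eq_C_mul_carlitzE_of_eval_aeval_eq_zero (hx : Transcendental F x) {i : ℕ} {P : K[X]}
    (hdeg : P.natDegree ≤ q ^ i) (hP : ∀ p ∈ degreeLT F i, P.eval (aeval x p) = 0) :
    P = C (P.coeff (q ^ i)) * carlitzE F x i := by
  rw [← sub_eq_zero]
  refine eq_zero_of_natDegree_lt_of_eval_aeval_eq_zero hx (i := i) ?_ fun p hp => ?_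
  · have hle : (P - C (P.coeff (q ^ i)) * carlitzE F x i).natDegree ≤ q ^ i :=
      (natDegree_sub_le _ _).trans
        (max_le hdeg ((natDegree_C_mul_le _ _).trans (natDegree_carlitzE F x i).le))
    have htop : (P - C (P.coeff (q ^ i)) * carlitzE F x i).coeff (q ^ i) = 0 := by
      rw [coeff_sub, coeff_C_mul, coeff_carlitzE_card_pow, mul_one, sub_self]
    have := natDegree_le_pred hle htop
    have : 0 < q ^ i := pow_pos Fintype.card_pos i
    omega
  · simp [hP p hp, eval_carlitzE_aeval hp]

theorem eval_carlitzE_algebraMap_mul_add (hx : Transcendental F x) (i : ℕ) (a : F) (u v : K) :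
    (carlitzE F x i).eval (algebraMap F K a * u + v)
      = algebraMap F K a * (carlitzE F x i).eval u + (carlitzE F x i).eval v := by
  set e := carlitzE F x i
  set a' := algebraMap F K a
  set P : K[X] := (e.comp (X + C v)).comp (C a' * X) - C a' * e - C (e.eval v) with hP
  have hshift : (e.comp (X + C v)).natDegree = q ^ i := by
    rw [natDegree_comp, natDegree_X_add_C, mul_one, natDegree_carlitzE]
  have hdeg : P.natDegree ≤ q ^ i := by
    refine (natDegree_sub_le _ _).trans (max_le ((natDegree_sub_le _ _).trans (max_le ?_ ?_)) ?_)
    · exact (natDegree_comp_C_mul_X_le _ _).trans hshift.le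
    · exact (natDegree_C_mul_le _ _).trans (natDegree_carlitzE F x i).le
    · simp
  have hvanish : ∀ p ∈ degreeLT F i, P.eval (aeval x p) = 0 := fun p hp => by
    have hap : a' * aeval x p = aeval x (a • p) := by rw [map_smul, Algebra.smul_def]
    simp only [hP, eval_sub, eval_comp, eval_mul, eval_add, eval_X, eval_C]
    rw [hap, add_comm, eval_carlitzE_add_aeval (Submodule.smul_mem _ a hp),
      eval_carlitzE_aeval hp]
    ring
  have htop : P.coeff (q ^ i) = 0 := by
    have hfrob : a' ^ q ^ i = a' := by rw [← map_pow, FiniteField.pow_card_pow]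
    rw [hP, coeff_sub, coeff_sub, comp_C_mul_X_coeff, coeff_C_mul, coeff_C, ← hshift,
      ((monic_carlitzE F x i).comp_X_add_C v).coeff_natDegree, hshift,
      coeff_carlitzE_card_pow, if_neg (pow_pos Fintype.card_pos i).ne', hfrob]
    ring
  have := congrArg (eval u) (eq_C_mul_carlitzE_of_eval_aeval_eq_zero hx hdeg hvanish)
  rw [htop, map_zero, zero_mul, eval_zero] at this
  simp only [hP, eval_sub, eval_comp, eval_mul, eval_add, eval_X, eval_C] at this
  linear_combination this

theorem eval_carlitzE_add (hx : Transcendental F x) (i : ℕ) (u v : K) :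
    (carlitzE F x i).eval (u + v) = (carlitzE F x i).eval u + (carlitzE F x i).eval v := by
  simpa using eval_carlitzE_algebraMap_mul_add hx i 1 u v

theorem eval_carlitzE_algebraMap_mul (hx : Transcendental F x) (i : ℕ) (a : F) (u : K) :
    (carlitzE F x i).eval (algebraMap F K a * u) = algebraMap F K a * (carlitzE F x i).eval u := by
  simpa [eval_carlitzE_zero] using eval_carlitzE_algebraMap_mul_add hx i a u 0

theorem eval_carlitzE_X_pow_ne_zero (hx : Transcendental F x) (i : ℕ) :
    (carlitzE F x i).eval (x ^ i) ≠ 0 := by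
  rw [eval_carlitzE, Finset.prod_ne_zero_iff]
  intro c _ h
  rw [sub_eq_zero, ← aeval_X_pow (R := F)] at h
  have hmem := ((degreeLTEquiv F i).symm c).prop
  rw [← transcendental_iff_injective.mp hx h, mem_degreeLT, degree_X_pow] at hmem
  exact lt_irrefl _ hmem

theorem coeff_one_carlitzE_ne_zero (hx : Transcendental F x) (i : ℕ) :
    (carlitzE F x i).coeff 1 ≠ 0 := by
  classical
  rw [carlitzE_eq_prod, ← Finset.mul_prod_erase _ _ (Finset.mem_univ 0)]
  simp only [map_zero, ZeroMemClass.coe_zero, sub_zero]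
  rw [coeff_X_mul _ 0, coeff_zero_eq_eval_zero, eval_prod, Finset.prod_ne_zero_iff]
  intro c hc
  simpa [eval_sub] using
    (injective_aeval_degreeLTEquiv_symm hx i).ne (Finset.ne_of_mem_erase hc)

variable (x) in
theorem coeff_one_carlitzE_pow_card (i : ℕ) : (carlitzE F x i ^ q).coeff 1 = 0 := by
  obtain ⟨g, hg⟩ : X ∣ carlitzE F x i := by
    rw [X_dvd_iff, coeff_zero_eq_eval_zero, eval_carlitzE_zero]
  rw [hg, mul_pow, coeff_X_pow_mul', if_neg (not_le.mpr Fintype.one_lt_card)]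

theorem eval_carlitzE_aeval_add_C_mul_X_pow (hx : Transcendental F x) {i : ℕ} {p : F[X]}
    (hp : p ∈ degreeLT F i) (a : F) :
    (carlitzE F x i).eval (aeval x (p + C a * X ^ i))
      = algebraMap F K a * (carlitzE F x i).eval (x ^ i) := by
  rw [map_add, add_comm, eval_carlitzE_add_aeval hp, map_mul, aeval_C, map_pow, aeval_X,
    eval_carlitzE_algebraMap_mul hx]

theorem eval_carlitzE_succ_mul_aeval_add_C_mul_X_pow (hx : Transcendental F x) {i : ℕ}
    {p : F[X]} (hp : p ∈ degreeLT F i) (a : F) :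
    (carlitzE F x (i + 1)).eval (x * aeval x (p + C a * X ^ i))
      = algebraMap F K a * (carlitzE F x (i + 1)).eval (x ^ (i + 1)) := by
  have hmul :
      x * aeval x (p + C a * X ^ i) = algebraMap F K a * x ^ (i + 1) + aeval x (X * p) := by
    simp only [map_add, map_mul, aeval_C, aeval_X, map_pow]
    ring
  rw [hmul, eval_carlitzE_add_aeval (X_mul_mem_degreeLT hp), eval_carlitzE_algebraMap_mul hx]

-- The coefficient of `e_i ^ q` is forced by evaluating at `x ^ i`;
-- `eval_carlitzE_succ_X_pow_succ` shows that it equals `[i + 1]`.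
theorem carlitzE_succ_comp_C_mul_X' (hx : Transcendental F x) (i : ℕ) :
    (carlitzE F x (i + 1)).comp (C x * X) = C x * carlitzE F x (i + 1)
      + C ((carlitzE F x (i + 1)).eval (x ^ (i + 1)) / (carlitzE F x i).eval (x ^ i) ^ q)
        * carlitzE F x i ^ q := by
  set e := carlitzE F x
  set γ := (e (i + 1)).eval (x ^ (i + 1)) / (e i).eval (x ^ i) ^ q
  have hγ : γ * (e i).eval (x ^ i) ^ q = (e (i + 1)).eval (x ^ (i + 1)) :=
    div_mul_cancel₀ _ (pow_ne_zero _ (eval_carlitzE_X_pow_ne_zero hx i))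
  rw [← sub_eq_zero, ← sub_sub]
  set H := (e (i + 1)).comp (C x * X) - C x * e (i + 1) - C γ * e i ^ q with hH
  have hdeg : H.natDegree ≤ q ^ (i + 1) := by
    refine (natDegree_sub_le _ _).trans (max_le ((natDegree_sub_le _ _).trans (max_le ?_ ?_)) ?_)
    · exact (natDegree_comp_C_mul_X_le _ _).trans (natDegree_carlitzE F x _).le
    · exact (natDegree_C_mul_le _ _).trans (natDegree_carlitzE F x _).le
    · refine (natDegree_C_mul_le _ _).trans ?_
      rw [natDegree_pow, natDegree_carlitzE, pow_succ']
  have hvanish : ∀ p ∈ degreeLT F (i + 1), H.eval (aeval x p) = 0 := fun p hp => by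
    obtain ⟨p', hp', a, rfl⟩ := exists_mem_degreeLT_eq_add_C_mul_X_pow hp
    have hfrob : algebraMap F K a ^ q = algebraMap F K a := by
      rw [← map_pow, FiniteField.pow_card]
    simp only [hH, eval_sub, eval_mul, eval_comp, eval_C, eval_X, eval_pow]
    rw [eval_carlitzE_succ_mul_aeval_add_C_mul_X_pow hx hp', eval_carlitzE_aeval hp,
      eval_carlitzE_aeval_add_C_mul_X_pow hx hp', mul_pow, hfrob, ← hγ]
    ring
  have hcoeff_one : H.coeff 1 = 0 := by
    rw [hH, coeff_sub, coeff_sub, comp_C_mul_X_coeff, coeff_C_mul, coeff_C_mul,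
      coeff_one_carlitzE_pow_card]
    ring
  have hH_eq := eq_C_mul_carlitzE_of_eval_aeval_eq_zero hx hdeg hvanish
  have htop : H.coeff (q ^ (i + 1)) = 0 := by
    have := congrArg (coeff · 1) hH_eq
    simp only [coeff_C_mul, hcoeff_one] at this
    exact (mul_eq_zero.mp this.symm).resolve_right (coeff_one_carlitzE_ne_zero hx _)
  rw [hH_eq, htop, C_0, zero_mul]

theorem eval_carlitzE_succ_X_pow_succ (hx : Transcendental F x) (i : ℕ) :
    (carlitzE F x (i + 1)).eval (x ^ (i + 1))
      = brk q x (i + 1) * (carlitzE F x i).eval (x ^ i) ^ q := by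
  have hpow : (carlitzE F x i ^ q).coeff (q ^ (i + 1)) = 1 := by
    simpa [natDegree_carlitzE, pow_succ'] using ((monic_carlitzE F x i).pow q).coeff_natDegree
  have htop := congrArg (coeff · (q ^ (i + 1))) (carlitzE_succ_comp_C_mul_X' hx i)
  simp only [comp_C_mul_X_coeff, coeff_add, coeff_C_mul, coeff_carlitzE_card_pow, hpow] at htop
  have hγ := (div_mul_cancel₀ ((carlitzE F x (i + 1)).eval (x ^ (i + 1)))
    (pow_ne_zero q (eval_carlitzE_X_pow_ne_zero hx i))).symm
  rw [brk]
  linear_combination hγ - (carlitzE F x i).eval (x ^ i) ^ q * htop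

theorem eval_carlitzE_succ_mul (hx : Transcendental F x) (i : ℕ) (u : K) :
    (carlitzE F x (i + 1)).eval (x * u)
      = x * (carlitzE F x (i + 1)).eval u + brk q x (i + 1) * (carlitzE F x i).eval u ^ q := by
  have := congrArg (eval u) (carlitzE_succ_comp_C_mul_X' hx i)
  rw [eval_carlitzE_succ_X_pow_succ hx,
    mul_div_cancel_right₀ _ (pow_ne_zero _ (eval_carlitzE_X_pow_ne_zero hx i))] at this
  simpa using this

theorem Dfac_card_eq_eval_carlitzE (hx : Transcendental F x) :
    ∀ i, Dfac q x i = (carlitzE F x i).eval (x ^ i)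
  | 0 => by simp [Dfac, carlitzE_zero]
  | i + 1 => by rw [Dfac, Dfac_card_eq_eval_carlitzE hx i, eval_carlitzE_succ_X_pow_succ hx]

theorem Dfac_card_ne_zero (hx : Transcendental F x) (i : ℕ) : Dfac q x i ≠ 0 :=
  Dfac_card_eq_eval_carlitzE hx i ▸ eval_carlitzE_X_pow_ne_zero hx i

end CarlitzPolynomials

section CarlitzModule

variable {F : Type*} [Field F] [Fintype F]

local notation "q" => Fintype.card F
local notation "x" => (RatFunc.X : RatFunc F)

def carlitzModCoeff (s : F[X]) (i : ℕ) : RatFunc F :=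
  (carlitzE F x i).eval (algebraMap F[X] (RatFunc F) s) / Dfac q x i

theorem carlitzModCoeff_eq_zero {s : F[X]} {i : ℕ} (h : s.natDegree < i) :
    carlitzModCoeff s i = 0 := by
  have hs : s ∈ degreeLT F i :=
    mem_degreeLT.mpr (degree_le_natDegree.trans_lt (by exact_mod_cast h))
  rw [carlitzModCoeff, ← RatFunc.aeval_X_left_eq_algebraMap, eval_carlitzE_aeval hs, zero_div]

theorem carlitzMod_eq_sum_carlitzModCoeff (s : F[X]) :
    carlitzMod F q s
      = ∑ i ∈ Finset.range (s.natDegree + 1), C (carlitzModCoeff s i) * X ^ q ^ i :=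
  rfl

theorem carlitzMod_eq_sum_range (s : F[X]) {n : ℕ} (hn : s.natDegree < n) :
    carlitzMod F q s = ∑ i ∈ Finset.range n, C (carlitzModCoeff s i) * X ^ q ^ i := by
  rw [carlitzMod_eq_sum_carlitzModCoeff]
  refine Finset.sum_subset (Finset.range_subset_range.mpr hn) fun i _ hi => ?_
  rw [carlitzModCoeff_eq_zero (by simpa using hi), C_0, zero_mul]

theorem carlitzModCoeff_add (s t : F[X]) (i : ℕ) :
    carlitzModCoeff (s + t) i = carlitzModCoeff s i + carlitzModCoeff t i := by
  rw [carlitzModCoeff, map_add, eval_carlitzE_add RatFunc.transcendental_X, add_div]; rfl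

theorem carlitzModCoeff_C_mul (a : F) (s : F[X]) (i : ℕ) :
    carlitzModCoeff (C a * s) i = algebraMap F (RatFunc F) a * carlitzModCoeff s i := by
  rw [carlitzModCoeff, map_mul, RatFunc.algebraMap_C, ← RatFunc.algebraMap_eq_C,
    eval_carlitzE_algebraMap_mul RatFunc.transcendental_X, mul_div_assoc]; rfl

theorem carlitzMod_add (s t : F[X]) :
    carlitzMod F q (s + t) = carlitzMod F q s + carlitzMod F q t := by
  have hlt : ∀ p : F[X], p.natDegree ≤ max s.natDegree t.natDegree → p.natDegree < _ :=
    fun _ h => Nat.lt_succ_of_le h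
  rw [carlitzMod_eq_sum_range _ (hlt _ (natDegree_add_le s t)),
    carlitzMod_eq_sum_range s (hlt _ (le_max_left _ _)),
    carlitzMod_eq_sum_range t (hlt _ (le_max_right _ _)), ← Finset.sum_add_distrib]
  simp only [carlitzModCoeff_add, C_add, add_mul]

theorem carlitzMod_C_mul (a : F) (s : F[X]) :
    carlitzMod F q (C a * s) = C (algebraMap F (RatFunc F) a) * carlitzMod F q s := by
  rw [carlitzMod_eq_sum_range _ (Nat.lt_succ_of_le (natDegree_C_mul_le a s)),
    carlitzMod_eq_sum_carlitzModCoeff, Finset.mul_sum]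
  simp only [carlitzModCoeff_C_mul, C_mul, mul_assoc]

theorem carlitzMod_one : carlitzMod F q 1 = X := by
  simp [carlitzMod, carlitzE_zero, Dfac]

theorem carlitzMod_X : carlitzMod F q X = C x * X + X ^ q := by
  have hx : Transcendental F x := RatFunc.transcendental_X
  have hD : (carlitzE F x 1).eval x = Dfac q x 1 := by
    simpa using (Dfac_card_eq_eval_carlitzE hx 1).symm
  have hD0 : Dfac q x 1 ≠ 0 := hD ▸ by simpa using eval_carlitzE_X_pow_ne_zero hx 1
  simp [carlitzMod, Finset.sum_range_succ, carlitzE_zero, Dfac.eq_1, hD, div_self hD0]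

theorem carlitzModCoeff_X_mul_zero (s : F[X]) :
    carlitzModCoeff (X * s) 0 = x * carlitzModCoeff s 0 := by
  simp [carlitzModCoeff, carlitzE_zero, Dfac.eq_1]

theorem carlitzModCoeff_X_mul_succ (s : F[X]) (i : ℕ) :
    carlitzModCoeff (X * s) (i + 1) = x * carlitzModCoeff s (i + 1) + carlitzModCoeff s i ^ q := by
  have hx : Transcendental F x := RatFunc.transcendental_X
  have hD : Dfac q x (i + 1) = brk q x (i + 1) * Dfac q x i ^ q := rfl
  have hbrk : brk q x (i + 1) ≠ 0 := left_ne_zero_of_mul (hD ▸ Dfac_card_ne_zero hx (i + 1))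
  rw [carlitzModCoeff, carlitzModCoeff, carlitzModCoeff, map_mul, RatFunc.algebraMap_X,
    eval_carlitzE_succ_mul hx, add_div, div_pow, mul_div_assoc, hD,
    mul_div_mul_left _ _ hbrk]

theorem carlitzMod_pow_card (s : F[X]) :
    carlitzMod F q s ^ q = ∑ i ∈ Finset.range (s.natDegree + 1),
      C (carlitzModCoeff s i ^ q) * X ^ q ^ (i + 1) := by
  have := map_sum (FiniteField.frobeniusAlgHom F (RatFunc F)[X])
    (fun i => C (carlitzModCoeff s i) * X ^ q ^ i) (Finset.range (s.natDegree + 1))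
  simp only [FiniteField.frobeniusAlgHom_apply, mul_pow, ← C_pow, ← pow_mul, ← pow_succ]
    at this
  rw [carlitzMod_eq_sum_carlitzModCoeff, this]

theorem carlitzMod_X_mul (s : F[X]) :
    carlitzMod F q (X * s) = (carlitzMod F q X).comp (carlitzMod F q s) := by
  have hlt : (X * s).natDegree < s.natDegree + 2 :=
    Nat.lt_succ_of_le (natDegree_mul_le.trans (by rw [natDegree_X, add_comm]))
  have hlt' : s.natDegree < s.natDegree + 2 := by omega
  rw [carlitzMod_X, add_comp, mul_comp, C_comp, X_comp, pow_comp, X_comp, carlitzMod_pow_card,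
    carlitzMod_eq_sum_range _ hlt, carlitzMod_eq_sum_range s hlt',
    Finset.mul_sum, Finset.sum_range_succ', Finset.sum_range_succ' (fun i => C x * _)]
  simp only [carlitzModCoeff_X_mul_succ, carlitzModCoeff_X_mul_zero, C_add, C_mul, add_mul,
    Finset.sum_add_distrib, mul_assoc]
  ring

end CarlitzModule

/-- `C_{ts}(z) = C_t(C_s(z))` for all `s, t ∈ F_q[x]`. -/
theorem carlitzMod_mul {F : Type*} [Field F] [Fintype F]
    (q : ℕ) (hq : q = Fintype.card F) (s t : Polynomial F) :
    carlitzMod F q (t * s) = (carlitzMod F q t).comp (carlitzMod F q s) := by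
  subst hq
  induction t using Polynomial.induction_on with
  | C a => rw [carlitzMod_C_mul, ← mul_one (C a), carlitzMod_C_mul, carlitzMod_one, mul_comp,
      C_comp, X_comp]
  | add t₁ t₂ h₁ h₂ => rw [add_mul, carlitzMod_add, h₁, h₂, carlitzMod_add, add_comp]
  | monomial n a ih =>
    rw [pow_succ', mul_left_comm, mul_assoc, carlitzMod_X_mul, ih, ← comp_assoc,
      ← carlitzMod_X_mul]
end
end

section
/- For a delta operator δ = τ^{-1}δ_0 (δ_0 linear invariant, δ_0(t) = 0, δ_0(t^{q^n}) = c_n t^{q^n} with c_n ≠ 0 for n ≥ 1), there exists a unique basic sequence {P_n}: F_q-linear polynomials with deg P_n = q^n, P_0(1) = 1, P_n(1) = 0 for n ≥ 1, δ_0 P_0 = 0, and δ_0 P_n = [n] P_{n-1}^q for n ≥ 1. -/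
noncomputable section

/-- The Frobenius `τ` on `F_q`-linear polynomials `Σ a_k t^{q^k}` (encoded as `ℕ →₀ L`):
`τ u = u^q`, i.e. `Σ a_k^q t^{q^{k+1}}`. -/
def frob {L : Type*} [CommRing L] (q : ℕ) (u : ℕ →₀ L) : ℕ →₀ L :=
  u.sum fun k a => Finsupp.single (k + 1) (a ^ q)

/-- Evaluation of the `F_q`-linear polynomial `Σ a_k t^{q^k}` at `t = 1`. -/
def eval1 {L : Type*} [CommRing L] (u : ℕ →₀ L) : L :=
  u.sum fun _ a => a

/-!
Since `δ₀` is diagonal with eigenvalues `c_k`, invertible on the degrees `k ≥ 1` and zero on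
`k = 0`, the equation `δ₀ u = w` (for `w` without constant term) fixes every coefficient of `u`
except the constant one, which is then fixed by the value `u(1)`. So `P_0` and each `P_n` in
turn are uniquely determined by the recursion, and `P_n` has degree `q^n` because
`[n] ≠ 0` and `P_n(k+1) = c_{k+1}⁻¹ [n] P_{n-1}(k)^q`.
-/

theorem existsUnique_nat_rec {α : Type*} {p : α → Prop} {r : ℕ → α → α → Prop}
    (h0 : ∃! a, p a) (hr : ∀ n a, ∃! b, r n a b) :
    ∃! f : ℕ → α, p (f 0) ∧ ∀ n, r n (f n) (f (n + 1)) := by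
  obtain ⟨a₀, ha₀⟩ := h0.exists
  choose g hg using fun n a => (hr n a).exists
  refine ⟨fun n => Nat.rec a₀ g n, ⟨ha₀, fun n => hg n _⟩, ?_⟩
  rintro f ⟨hf0, hf⟩
  funext n
  induction n with
  | zero => exact h0.unique hf0 ha₀
  | succ n ih => exact (hr n (f n)).unique (hf n) (by rw [ih]; exact hg n _)

theorem apply_eq_mul_of_map_single {ι R : Type*} [CommSemiring R]
    {δ : (ι →₀ R) →ₗ[R] (ι →₀ R)} {c : ι → R}
    (hδ : ∀ i, δ (Finsupp.single i 1) = c i • Finsupp.single i 1) (u : ι →₀ R) (i : ι) :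
    δ u i = c i * u i := by
  induction u using Finsupp.induction_linear with
  | zero => simp
  | add u v hu hv => rw [map_add, Finsupp.add_apply, hu, hv, Finsupp.add_apply, mul_add]
  | single j b =>
    rw [← mul_one b, ← smul_eq_mul, ← Finsupp.smul_single, map_smul, hδ]
    rcases eq_or_ne j i with rfl | hji
    · simp [mul_comm]
    · simp [hji]

theorem brk_single_one_ne_zero {R : Type*} [CommRing R] [Nontrivial R] {q n : ℕ}
    (h : q ^ n ≠ 1) : brk q (HahnSeries.single (1 : ℤ) (1 : R)) n ≠ 0 := by
  rw [brk, sub_ne_zero, HahnSeries.single_pow, one_pow]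
  intro heq
  have hcoeff := congrArg (fun s : HahnSeries ℤ R => s.coeff 1) heq
  simp only [nsmul_eq_mul, mul_one, Nat.cast_pow] at hcoeff
  have hne : (1 : ℤ) ≠ (q : ℤ) ^ n := by exact_mod_cast h.symm
  rw [HahnSeries.coeff_single_of_ne hne, HahnSeries.coeff_single_same] at hcoeff
  exact zero_ne_one hcoeff

section FqLinear

variable {L : Type*} [CommRing L]

theorem frob_apply_zero (q : ℕ) (u : ℕ →₀ L) : frob q u 0 = 0 := by
  simp [frob, Finsupp.sum_apply]

theorem frob_apply_succ {q : ℕ} (hq : q ≠ 0) (u : ℕ →₀ L) (j : ℕ) :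
    frob q u (j + 1) = u j ^ q := by
  rw [frob, Finsupp.sum_apply, Finsupp.sum_eq_single j]
  · simp
  · intro k _ hkj
    simp [hkj]
  · simp [zero_pow hq]

theorem eval1_single (n : ℕ) (a : L) : eval1 (Finsupp.single n a) = a := by
  simp [eval1]

theorem eval1_add (u v : ℕ →₀ L) : eval1 (u + v) = eval1 u + eval1 v := by
  simp [eval1, Finsupp.sum_add_index']

theorem eval1_sub (u v : ℕ →₀ L) : eval1 (u - v) = eval1 u - eval1 v := by
  simp [eval1, Finsupp.sum_sub_index]

theorem eval1_eq_apply_zero {u : ℕ →₀ L} (hu : ∀ k, k ≠ 0 → u k = 0) : eval1 u = u 0 :=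
  Finsupp.sum_eq_single 0 (fun k _ hk => hu k hk) (fun _ => rfl)

end FqLinear

section DiagonalOperator

variable {L : Type*} [Field L] {c : ℕ → L} {δ₀ : (ℕ →₀ L) →ₗ[L] (ℕ →₀ L)}

theorem apply_eq_inv_mul_map_apply
    (hδ : ∀ n, δ₀ (Finsupp.single n 1) = c n • Finsupp.single n 1)
    (hc : ∀ n, n ≠ 0 → c n ≠ 0) (u : ℕ →₀ L) {k : ℕ} (hk : k ≠ 0) :
    u k = (c k)⁻¹ * δ₀ u k := by
  rw [apply_eq_mul_of_map_single hδ, inv_mul_cancel_left₀ (hc k hk)]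

theorem eq_of_map_eq_of_eval1_eq
    (hδ : ∀ n, δ₀ (Finsupp.single n 1) = c n • Finsupp.single n 1)
    (hc : ∀ n, n ≠ 0 → c n ≠ 0) {u v : ℕ →₀ L} (hδuv : δ₀ u = δ₀ v)
    (heval : eval1 u = eval1 v) : u = v := by
  have hhigh : ∀ k, k ≠ 0 → (u - v) k = 0 := fun k hk => by
    rw [Finsupp.sub_apply, apply_eq_inv_mul_map_apply hδ hc u hk,
      apply_eq_inv_mul_map_apply hδ hc v hk, hδuv, sub_self]
  have hconst : (u - v) 0 = 0 := by
    rw [← eval1_eq_apply_zero hhigh, eval1_sub, heval, sub_self]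
  rw [← sub_eq_zero]
  ext k
  rcases eq_or_ne k 0 with rfl | hk
  · exact hconst
  · exact hhigh k hk

theorem exists_map_eq_of_apply_zero_eq_zero
    (hδ : ∀ n, δ₀ (Finsupp.single n 1) = c n • Finsupp.single n 1)
    (hc0 : c 0 = 0) (hc : ∀ n, n ≠ 0 → c n ≠ 0) {w : ℕ →₀ L} (hw : w 0 = 0) (e : L) :
    ∃ u, δ₀ u = w ∧ eval1 u = e := by
  let v : ℕ →₀ L := Finsupp.onFinset w.support (fun k => (c k)⁻¹ * w k)
    (fun k hk => Finsupp.mem_support_iff.mpr (right_ne_zero_of_mul hk))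
  refine ⟨v + Finsupp.single 0 (e - eval1 v), ?_, by rw [eval1_add, eval1_single, add_sub_cancel]⟩
  ext k
  rw [apply_eq_mul_of_map_single hδ]
  rcases eq_or_ne k 0 with rfl | hk
  · rw [hc0, zero_mul, hw]
  · simp [v, Finsupp.single_eq_of_ne hk, mul_inv_cancel_left₀ (hc k hk)]

theorem existsUnique_map_eq_eval1_eq
    (hδ : ∀ n, δ₀ (Finsupp.single n 1) = c n • Finsupp.single n 1)
    (hc0 : c 0 = 0) (hc : ∀ n, n ≠ 0 → c n ≠ 0) {w : ℕ →₀ L} (hw : w 0 = 0) (e : L) :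
    ∃! u, δ₀ u = w ∧ eval1 u = e := by
  obtain ⟨u, hu⟩ := exists_map_eq_of_apply_zero_eq_zero hδ hc0 hc hw e
  exact ⟨u, hu, fun v hv =>
    eq_of_map_eq_of_eval1_eq hδ hc (hv.1.trans hu.1.symm) (hv.2.trans hu.2.symm)⟩

theorem eq_single_zero_one_of_map_eq_zero
    (hδ : ∀ n, δ₀ (Finsupp.single n 1) = c n • Finsupp.single n 1)
    (hc0 : c 0 = 0) (hc : ∀ n, n ≠ 0 → c n ≠ 0) {u : ℕ →₀ L} (hu : δ₀ u = 0)
    (heval : eval1 u = 1) : u = Finsupp.single 0 1 :=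
  eq_of_map_eq_of_eval1_eq hδ hc (by rw [hu, hδ, hc0, zero_smul]) (by rw [heval, eval1_single])

theorem degree_succ_of_map_eq_smul_frob
    (hδ : ∀ n, δ₀ (Finsupp.single n 1) = c n • Finsupp.single n 1)
    (hc : ∀ n, n ≠ 0 → c n ≠ 0) {q : ℕ} (hq : q ≠ 0) {β : L} (hβ : β ≠ 0)
    {u v : ℕ →₀ L} (hv : δ₀ v = β • frob q u) {n : ℕ}
    (hu : u n ≠ 0 ∧ ∀ k, n < k → u k = 0) :
    v (n + 1) ≠ 0 ∧ ∀ k, n + 1 < k → v k = 0 := by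
  have hcoeff : ∀ j, v (j + 1) = (c (j + 1))⁻¹ * (β * u j ^ q) := fun j => by
    rw [apply_eq_inv_mul_map_apply hδ hc v j.succ_ne_zero, hv, Finsupp.smul_apply,
      frob_apply_succ hq, smul_eq_mul]
  refine ⟨?_, fun k hk => ?_⟩
  · rw [hcoeff]
    exact mul_ne_zero (inv_ne_zero (hc _ n.succ_ne_zero)) (mul_ne_zero hβ (pow_ne_zero q hu.1))
  · obtain ⟨j, rfl⟩ := Nat.exists_eq_add_of_lt hk
    rw [hcoeff, hu.2 _ (by omega), zero_pow hq, mul_zero, mul_zero]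

end DiagonalOperator

/-- Existence and uniqueness of the basic sequence of a delta operator
`δ = τ^{-1} δ₀`: here `δ₀` is a linear invariant operator on `F_q`-linear polynomials
over `L` (an extension of `K = F_q((x))`), i.e. `δ₀(t^{q^n}) = c_n t^{q^n}` with `c_0 = 0`
(that is `δ₀(t) = 0`) and `c_n ≠ 0` for `n ≥ 1`.  The basic sequence `{P_n}` satisfies
`deg P_n = q^n`, `P_0(1) = 1`, `P_n(1) = 0` for `n ≥ 1`, `δ₀ P_0 = 0`, and
`δ₀ P_n = [n] P_{n-1}^q` for `n ≥ 1`. -/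
theorem basic_sequence_exists_unique {F L : Type*} [Field F] [Fintype F] [Field L]
    [Algebra (LaurentSeries F) L] (q : ℕ) (hq : q = Fintype.card F)
    (c : ℕ → L) (hc0 : c 0 = 0) (hc : ∀ n, 1 ≤ n → c n ≠ 0)
    (δ₀ : (ℕ →₀ L) →ₗ[L] (ℕ →₀ L))
    (hδ₀ : ∀ n : ℕ, δ₀ (Finsupp.single n 1) = c n • Finsupp.single n 1) :
    ∃! P : ℕ → (ℕ →₀ L),
      (∀ n : ℕ, P n n ≠ 0 ∧ ∀ k, n < k → P n k = 0)
      ∧ eval1 (P 0) = 1 ∧ (∀ n, 1 ≤ n → eval1 (P n) = 0)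
      ∧ δ₀ (P 0) = 0
      ∧ ∀ n, 1 ≤ n →
          δ₀ (P n)
            = algebraMap (LaurentSeries F) L
                (brk q (HahnSeries.single (1 : ℤ) (1 : F)) n) • frob q (P (n - 1)) := by
  have hq1 : 1 < q := hq ▸ Fintype.one_lt_card
  have hc' : ∀ n, n ≠ 0 → c n ≠ 0 := fun n hn => hc n (Nat.one_le_iff_ne_zero.mpr hn)
  set β : ℕ → L := fun n =>
    algebraMap (LaurentSeries F) L (brk q (HahnSeries.single (1 : ℤ) (1 : F)) n)
  have hβ : ∀ n, β (n + 1) ≠ 0 := fun n =>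
    (map_ne_zero _).mpr (brk_single_one_ne_zero (Nat.pow_eq_one.not.mpr (by omega)))
  obtain ⟨P, ⟨⟨hP0, hP0e⟩, hPs⟩, huniq⟩ := existsUnique_nat_rec
    (p := fun u => δ₀ u = 0 ∧ eval1 u = 1)
    (r := fun n u v => δ₀ v = β (n + 1) • frob q u ∧ eval1 v = 0)
    (existsUnique_map_eq_eval1_eq hδ₀ hc0 hc' Finsupp.zero_apply 1)
    (fun n u => existsUnique_map_eq_eval1_eq hδ₀ hc0 hc' (by simp [frob_apply_zero]) 0)
  have hdeg : ∀ n, P n n ≠ 0 ∧ ∀ k, n < k → P n k = 0 := by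
    intro n
    induction n with
    | zero =>
      rw [eq_single_zero_one_of_map_eq_zero hδ₀ hc0 hc' hP0 hP0e]
      exact ⟨by simp, fun k hk => Finsupp.single_eq_of_ne hk.ne'⟩
    | succ n ih => exact degree_succ_of_map_eq_smul_frob hδ₀ hc' (by omega) (hβ n) (hPs n).1 ih
  refine ⟨P, ⟨hdeg, hP0e, fun n hn => ?_, hP0, fun n hn => ?_⟩, ?_⟩
  · obtain ⟨m, rfl⟩ := Nat.exists_eq_add_of_le' hn
    exact (hPs m).2
  · obtain ⟨m, rfl⟩ := Nat.exists_eq_add_of_le' hn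
    exact (hPs m).1
  rintro P' ⟨-, hP0e', hPe', hP0', hPs'⟩
  exact huniq P' ⟨⟨hP0', hP0e'⟩, fun n => ⟨hPs' (n + 1) n.succ_pos, hPe' (n + 1) n.succ_pos⟩⟩
end
end

section
/- (Gekeler's identity) For every h ≥ 1, Σ_{j=0}^{h-1} (-1)^j / (L_j D_{h-j}^{q^j}) = (-1)^{h+1}/L_h, and consequently Σ_{j=1}^{h} (-1)^j/(L_j D_{h-j}^{q^j}) = -1/D_h. -/
/-! Since `y ↦ y ^ q` is additive in characteristic `p`, `[h] = [j] + [h - j] ^ q ^ j`. Writing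
`T_j` for the `j`-th summand, this splits `[h] T_j` into `[j] T_j` and
`[h - j] ^ q ^ j T_j = -[j + 1] T_{j + 1}`, so `[h] Σ_{j=0}^{h} T_j` telescopes to `[0] T_0 = 0`.
Both identities then follow by isolating `T_h = (-1)^h / L_h`, resp. `T_0 = 1 / D_h`. -/

noncomputable section

section CarlitzFactorial

variable {K : Type*}

@[simp]
lemma brk_zero [CommRing K] (q : ℕ) (x : K) : brk q x 0 = 0 := by
  simp [brk]

lemma brk_add_s16 [CommRing K] (p : ℕ) [ExpChar K p] (n : ℕ) (x : K) (i j : ℕ) :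
    brk (p ^ n) x (i + j) = brk (p ^ n) x i + brk (p ^ n) x j ^ (p ^ n) ^ i := by
  simp only [brk, ← pow_mul, sub_pow_expChar_pow, ← pow_add]
  ring

variable [CommRing K] [IsDomain K] {q : ℕ} {x : K}

lemma Dfac_ne_zero_s16 (hbrk : ∀ i, 0 < i → brk q x i ≠ 0) (i : ℕ) : Dfac q x i ≠ 0 := by
  induction i with
  | zero => simp [Dfac]
  | succ i ih => exact mul_ne_zero (hbrk _ i.succ_pos) (pow_ne_zero _ ih)

lemma Lfac_ne_zero_s16 (hbrk : ∀ i, 0 < i → brk q x i ≠ 0) (i : ℕ) : Lfac q x i ≠ 0 := by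
  induction i with
  | zero => simp [Lfac]
  | succ i ih => exact mul_ne_zero (hbrk _ i.succ_pos) ih

end CarlitzFactorial

lemma RatFunc.brk_X_ne_zero {F : Type*} [Field F] {q : ℕ} (hq : 1 < q) {i : ℕ} (hi : 0 < i) :
    brk q (RatFunc.X : RatFunc F) i ≠ 0 := by
  rw [brk, ← RatFunc.algebraMap_X, ← map_pow, ← map_sub,
    map_ne_zero_iff _ (RatFunc.algebraMap_injective F)]
  exact FiniteField.X_pow_card_pow_sub_X_ne_zero F hi.ne' hq

section GekelerTerm

variable {K : Type*} [Field K]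

def gekelerTerm (q : ℕ) (x : K) (h j : ℕ) : K :=
  (-1) ^ j / (Lfac q x j * Dfac q x (h - j) ^ q ^ j)

variable {q : ℕ} {x : K}

lemma gekelerTerm_zero (h : ℕ) : gekelerTerm q x h 0 = 1 / Dfac q x h := by
  simp [gekelerTerm, Lfac]

lemma gekelerTerm_self (h : ℕ) : gekelerTerm q x h h = (-1) ^ h / Lfac q x h := by
  simp [gekelerTerm, Dfac]

lemma brk_pow_mul_gekelerTerm (hbrk : ∀ i, 0 < i → brk q x i ≠ 0) {h j : ℕ} (hj : j < h) :
    brk q x (h - j) ^ q ^ j * gekelerTerm q x h j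
      = -(brk q x (j + 1) * gekelerTerm q x h (j + 1)) := by
  obtain ⟨k, hk⟩ : ∃ k, h - j = k + 1 := ⟨h - j - 1, by omega⟩
  have hk' : h - (j + 1) = k := by omega
  have := hbrk _ k.succ_pos
  have := hbrk _ (j.succ_pos)
  have := Lfac_ne_zero_s16 hbrk j
  have := Dfac_ne_zero_s16 hbrk k
  simp only [gekelerTerm, hk, hk', Dfac, Lfac, mul_pow, ← pow_mul, ← pow_succ']
  field_simp
  ring

variable {p : ℕ} [ExpChar K p] {n : ℕ}

theorem sum_gekelerTerm_eq_zero (hbrk : ∀ i, 0 < i → brk (p ^ n) x i ≠ 0) {h : ℕ}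
    (hh : 0 < h) :
    ∑ j ∈ Finset.range (h + 1), gekelerTerm (p ^ n) x h j = 0 := by
  have hpow : (p ^ n) ^ h ≠ 0 := pow_ne_zero _ (pow_ne_zero _ (expChar_pos K p).ne')
  set T := gekelerTerm (p ^ n) x h
  have hsplit : brk (p ^ n) x h * ∑ j ∈ Finset.range (h + 1), T j
      = ∑ j ∈ Finset.range (h + 1), brk (p ^ n) x j * T j
        + ∑ j ∈ Finset.range (h + 1), brk (p ^ n) x (h - j) ^ (p ^ n) ^ j * T j := by
    rw [Finset.mul_sum, ← Finset.sum_add_distrib]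
    refine Finset.sum_congr rfl fun j hj => ?_
    rw [← add_mul, ← brk_add_s16, Nat.add_sub_cancel' (Finset.mem_range_succ_iff.mp hj)]
  have hfirst : ∑ j ∈ Finset.range (h + 1), brk (p ^ n) x j * T j
      = ∑ j ∈ Finset.range h, brk (p ^ n) x (j + 1) * T (j + 1) := by
    rw [Finset.sum_range_succ', brk_zero, zero_mul, add_zero]
  have hsecond : ∑ j ∈ Finset.range (h + 1), brk (p ^ n) x (h - j) ^ (p ^ n) ^ j * T j
      = -∑ j ∈ Finset.range h, brk (p ^ n) x (j + 1) * T (j + 1) := by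
    rw [Finset.sum_range_succ, Nat.sub_self, brk_zero, zero_pow hpow, zero_mul, add_zero,
      ← Finset.sum_neg_distrib]
    exact Finset.sum_congr rfl fun j hj => brk_pow_mul_gekelerTerm hbrk (Finset.mem_range.mp hj)
  refine (mul_eq_zero.mp ?_).resolve_left (hbrk h hh)
  rw [hsplit, hfirst, hsecond, add_neg_cancel]

end GekelerTerm

/-- Gekeler's identity: for every `h ≥ 1`,
`Σ_{j=0}^{h-1} (-1)^j / (L_j D_{h-j}^{q^j}) = (-1)^{h+1}/L_h`, and consequently
`Σ_{j=1}^{h} (-1)^j / (L_j D_{h-j}^{q^j}) = -1/D_h` (over `F_q(x)`). -/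
theorem gekeler_identity {F : Type*} [Field F] [Fintype F]
    (q : ℕ) (hq : q = Fintype.card F) (h : ℕ) (hh : 1 ≤ h) :
    (∑ j ∈ Finset.range h,
        (-1 : RatFunc F) ^ j
          / (Lfac q (RatFunc.X : RatFunc F) j
              * (Dfac q (RatFunc.X : RatFunc F) (h - j)) ^ q ^ j)
      = (-1 : RatFunc F) ^ (h + 1) / Lfac q (RatFunc.X : RatFunc F) h)
    ∧ ∑ j ∈ Finset.Icc 1 h,
        (-1 : RatFunc F) ^ j
          / (Lfac q (RatFunc.X : RatFunc F) j
              * (Dfac q (RatFunc.X : RatFunc F) (h - j)) ^ q ^ j)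
        = -(1 / Dfac q (RatFunc.X : RatFunc F) h) := by
  obtain ⟨p, _⟩ := CharP.exists F
  obtain ⟨n, hp, hcard⟩ := FiniteField.card F p
  have : Fact p.Prime := ⟨hp⟩
  have : CharP (RatFunc F) p :=
    charP_of_injective_algebraMap (algebraMap F (RatFunc F)).injective p
  rw [hcard] at hq
  subst hq
  have hbrk : ∀ i, 0 < i → brk (p ^ (n : ℕ)) (RatFunc.X : RatFunc F) i ≠ 0 := fun i =>
    RatFunc.brk_X_ne_zero (hcard ▸ Fintype.one_lt_card)
  have hsum := sum_gekelerTerm_eq_zero hbrk hh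
  constructor
  · rw [Finset.sum_range_succ, gekelerTerm_self, ← eq_neg_iff_add_eq_zero] at hsum
    exact hsum.trans (by rw [pow_succ, mul_neg_one, neg_div])
  · rw [Finset.range_eq_Ico, Finset.sum_eq_sum_Ico_succ_bot (by omega), zero_add,
      Finset.Ico_add_one_right_eq_Icc, gekelerTerm_zero] at hsum
    exact eq_neg_of_add_eq_zero_right hsum
end
end

section
/- Define the generalized exponential e_δ(t) = Σ_{j≥0} b_j t^{q^j} by b_0 = 1 and b_{j+1} = b_j^q/(D_{j+1}S_{j+1}), where S_n = Σ_{l=1}^{n} σ_l/D_{n-l}^{q^l}. If |σ_1| = 1 and |σ_l| ≤ 1 for all l ≥ 2, then |D_nS_n| = q^{-1} for all n ≥ 1 and |b_j| = q^{(q^j-1)/(q-1)} for all j ≥ 0. -/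
/-!
In `F_q((x))` the bracket `[i] = x^{q^i} - x` has order `1`, so `D_n = [n] D_{n-1}^q` has order
`e_n = (q^n - 1)/(q - 1)`, the solution of `e_n = q e_{n-1} + 1`, `e_0 = 0`. The `l`-th term of
`S_n` then has absolute value `|σ_l| q^{q^l e_{n-l}}`, and `q^l e_{n-l} = (q^n - q^l)/(q - 1)`
is largest for `l = 1`. Since `|σ_1| = 1` and `|σ_l| ≤ 1`, the term `l = 1` strictly dominates,
so by the ultrametric inequality `|S_n| = q^{q e_{n-1}} = q^{e_n - 1}` and `|D_n S_n| = q⁻¹`.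
The recursion for `b_j` then gives `log_q |b_{j+1}| = q log_q |b_j| + 1`, whence `|b_j| = q^{e_j}`.
-/

noncomputable section
open scoped Classical

/-- The local parameter `x ∈ K = F_q((x))`. -/
def xK (F : Type*) [Field F] : LaurentSeries F := HahnSeries.single (1 : ℤ) 1

/-- The absolute value on `K = F_q((x))`: `|z| = q^{-m}` where `m` is the order. -/
def absK (q : ℕ) {F : Type*} [Field F] (z : LaurentSeries F) : ℝ :=
  if z = 0 then 0 else (q : ℝ) ^ (-z.order)

/-- `S_n = Σ_{l=1}^{n} σ_l / D_{n-l}^{q^l}`, for coefficients `σ_l ∈ K̄_c` of a delta operator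
`δ₀ = Σ σ_l Δ^{(l)}`. -/
def Sseq {F L : Type*} [Field F] [Field L] [Algebra (LaurentSeries F) L]
    (q : ℕ) (σ : ℕ → L) (n : ℕ) : L :=
  ∑ l ∈ Finset.Icc 1 n,
    σ l / algebraMap (LaurentSeries F) L ((Dfac q (xK F) (n - l)) ^ q ^ l)

/-- The order `e_n` of `D_n` at `x`. -/
def dfacOrder (q n : ℕ) : ℝ := ((q : ℝ) ^ n - 1) / ((q : ℝ) - 1)

@[simp]
lemma dfacOrder_zero (q : ℕ) : dfacOrder q 0 = 0 := by
  simp [dfacOrder]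

lemma dfacOrder_succ {q : ℕ} (hq : 1 < q) (n : ℕ) :
    dfacOrder q (n + 1) = q * dfacOrder q n + 1 := by
  have : (q : ℝ) - 1 ≠ 0 := sub_ne_zero.2 (by exact_mod_cast hq.ne')
  unfold dfacOrder
  field_simp
  ring

lemma pow_mul_dfacOrder_sub_lt {q : ℕ} (hq : 1 < q) {l n : ℕ} (hl : 2 ≤ l) (hln : l ≤ n) :
    (q : ℝ) ^ l * dfacOrder q (n - l) < q * dfacOrder q (n - 1) := by
  have hq' : (1 : ℝ) < q := by exact_mod_cast hq
  have hn_l : (q : ℝ) ^ l * (q : ℝ) ^ (n - l) = (q : ℝ) ^ n := by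
    rw [← pow_add, Nat.add_sub_cancel' hln]
  have hn_1 : (q : ℝ) * (q : ℝ) ^ (n - 1) = (q : ℝ) ^ n := by
    rw [← pow_succ', Nat.sub_add_cancel (by omega)]
  have hql : (q : ℝ) < (q : ℝ) ^ l := by
    simpa using pow_lt_pow_right₀ hq' (show 1 < l by omega)
  unfold dfacOrder
  rw [← mul_div_assoc, ← mul_div_assoc]
  apply div_lt_div_of_pos_right _ (by linarith)
  rw [mul_sub, mul_sub, hn_l, hn_1]
  linarith

lemma xK_pow {F : Type*} [Field F] (k : ℕ) : xK F ^ k = HahnSeries.single (k : ℤ) (1 : F) := by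
  simp [xK, HahnSeries.single_pow]

lemma orderTop_xK_pow_sub_xK {F : Type*} [Field F] {k : ℕ} (hk : 1 < k) :
    (xK F ^ k - xK F).orderTop = 1 := by
  have hxK : (-xK F).orderTop = 1 := by
    rw [HahnSeries.orderTop_neg, xK, HahnSeries.orderTop_single one_ne_zero]
    rfl
  rw [sub_eq_neg_add, HahnSeries.orderTop_add_eq_left, hxK]
  rw [hxK, xK_pow, HahnSeries.orderTop_single one_ne_zero]
  exact_mod_cast hk

lemma absK_brk_xK {F : Type*} [Field F] {q i : ℕ} (hq : 2 ≤ q) (hi : 1 ≤ i) :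
    absK q (brk q (xK F) i) = (q : ℝ)⁻¹ := by
  have hord := orderTop_xK_pow_sub_xK (F := F) (k := q ^ i)
    (lt_of_lt_of_le (by omega) (Nat.le_self_pow (by omega) q))
  have hne : xK F ^ q ^ i - xK F ≠ 0 := by
    rw [← HahnSeries.orderTop_ne_top, hord]
    exact WithTop.coe_ne_top
  have hord' : (xK F ^ q ^ i - xK F).order = 1 := by
    exact_mod_cast (HahnSeries.order_eq_orderTop_of_ne_zero hne).trans hord
  rw [brk, absK, if_neg hne, hord', zpow_neg_one]

section AbsoluteValue

variable {F L : Type*} [Field F] [Field L] [Algebra (LaurentSeries F) L] {q : ℕ}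
  {abv : AbsoluteValue L ℝ}

lemma abv_algebraMap_Dfac (hq : 2 ≤ q)
    (hext : ∀ z : LaurentSeries F, abv (algebraMap (LaurentSeries F) L z) = absK q z) (n : ℕ) :
    abv (algebraMap (LaurentSeries F) L (Dfac q (xK F) n)) = (q : ℝ) ^ (-dfacOrder q n) := by
  have hq0 : (0 : ℝ) < q := by positivity
  induction n with
  | zero => simp [Dfac]
  | succ n ih =>
    rw [Dfac, map_mul, map_pow, map_mul, map_pow, hext, absK_brk_xK hq (by omega), ih,
      ← Real.rpow_mul_natCast hq0.le, ← Real.rpow_neg_one, ← Real.rpow_add hq0,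
      dfacOrder_succ (by omega)]
    ring_nf

lemma abv_Sseq_term (hq : 2 ≤ q)
    (hext : ∀ z : LaurentSeries F, abv (algebraMap (LaurentSeries F) L z) = absK q z)
    (σ : ℕ → L) (n l : ℕ) :
    abv (σ l / algebraMap (LaurentSeries F) L (Dfac q (xK F) (n - l) ^ q ^ l))
      = abv (σ l) * (q : ℝ) ^ ((q : ℝ) ^ l * dfacOrder q (n - l)) := by
  have hq0 : (0 : ℝ) < q := by positivity
  rw [map_div₀, map_pow, map_pow, abv_algebraMap_Dfac hq hext, ← Real.rpow_mul_natCast hq0.le,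
    div_eq_mul_inv, ← Real.rpow_neg hq0.le]
  push_cast
  ring_nf

lemma abv_Sseq (hq : 2 ≤ q)
    (hext : ∀ z : LaurentSeries F, abv (algebraMap (LaurentSeries F) L z) = absK q z)
    (hna : IsNonarchimedean abv) {σ : ℕ → L} (hσ1 : abv (σ 1) = 1)
    (hσ : ∀ l, 2 ≤ l → abv (σ l) ≤ 1) {n : ℕ} (hn : 1 ≤ n) :
    abv (Sseq (F := F) q σ n) = (q : ℝ) ^ ((q : ℝ) * dfacOrder q (n - 1)) := by
  have hq1 : (1 : ℝ) < q := by exact_mod_cast hq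
  have hterm_one := abv_Sseq_term hq hext σ n 1
  rw [hσ1, one_mul, pow_one (q : ℝ)] at hterm_one
  rw [Sseq, hna.apply_sum_eq_of_lt (fun a => (abv.map_neg a).symm)
    (Finset.mem_Icc.2 ⟨le_rfl, hn⟩), hterm_one]
  intro l hl hl_ne
  obtain ⟨hl_pos, hln⟩ := Finset.mem_Icc.1 hl
  rw [abv_Sseq_term hq hext, hterm_one]
  calc abv (σ l) * (q : ℝ) ^ ((q : ℝ) ^ l * dfacOrder q (n - l))
      ≤ (q : ℝ) ^ ((q : ℝ) ^ l * dfacOrder q (n - l)) :=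
        mul_le_of_le_one_left (by positivity) (hσ l (by omega))
    _ < (q : ℝ) ^ ((q : ℝ) * dfacOrder q (n - 1)) :=
        Real.rpow_lt_rpow_of_exponent_lt hq1 (pow_mul_dfacOrder_sub_lt hq (by omega) hln)

lemma abv_algebraMap_Dfac_mul_Sseq (hq : 2 ≤ q)
    (hext : ∀ z : LaurentSeries F, abv (algebraMap (LaurentSeries F) L z) = absK q z)
    (hna : IsNonarchimedean abv) {σ : ℕ → L} (hσ1 : abv (σ 1) = 1)
    (hσ : ∀ l, 2 ≤ l → abv (σ l) ≤ 1) {n : ℕ} (hn : 1 ≤ n) :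
    abv (algebraMap (LaurentSeries F) L (Dfac q (xK F) n) * Sseq (F := F) q σ n) = (q : ℝ)⁻¹ := by
  have hq0 : (0 : ℝ) < q := by positivity
  obtain ⟨m, rfl⟩ : ∃ m, n = m + 1 := ⟨n - 1, by omega⟩
  rw [map_mul, abv_algebraMap_Dfac hq hext, abv_Sseq hq hext hna hσ1 hσ hn, ← Real.rpow_add hq0,
    dfacOrder_succ (by omega), Nat.add_sub_cancel, ← Real.rpow_neg_one]
  ring_nf

lemma abv_eq_rpow_dfacOrder_of_recurrence (hq : 1 < q) {c b : ℕ → L}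
    (hc : ∀ n, 1 ≤ n → abv (c n) = (q : ℝ)⁻¹) (hb0 : b 0 = 1)
    (hb : ∀ j, b (j + 1) = b j ^ q / c (j + 1)) (j : ℕ) :
    abv (b j) = (q : ℝ) ^ dfacOrder q j := by
  have hq0 : (0 : ℝ) < q := by positivity
  induction j with
  | zero => simp [hb0]
  | succ j ih =>
    rw [hb, map_div₀, map_pow, ih, hc _ (by omega), ← Real.rpow_mul_natCast hq0.le,
      div_eq_mul_inv, inv_inv, ← Real.rpow_add_one hq0.ne', dfacOrder_succ hq]
    ring_nf

end AbsoluteValue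

/-- If `|σ_1| = 1` and `|σ_l| ≤ 1` for `l ≥ 2`, then `|D_n S_n| = q^{-1}` for all `n ≥ 1`,
and the coefficients of the generalized exponential `e_δ(t) = Σ b_j t^{q^j}` (`b_0 = 1`,
`b_{j+1} = b_j^q/(D_{j+1}S_{j+1})`) satisfy `|b_j| = q^{(q^j-1)/(q-1)}` for all `j ≥ 0`.
Here `L` is a nonarchimedean valued extension of `K = F_q((x))` (such as `K̄_c`). -/
theorem generalized_exponential_abs {F L : Type*} [Field F] [Fintype F] [Field L]
    [Algebra (LaurentSeries F) L]
    (q : ℕ) (hq : q = Fintype.card F)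
    (abv : AbsoluteValue L ℝ)
    (hna : ∀ a b : L, abv (a + b) ≤ max (abv a) (abv b))
    (hext : ∀ z : LaurentSeries F, abv (algebraMap (LaurentSeries F) L z) = absK q z)
    (σ : ℕ → L) (hσ1 : abv (σ 1) = 1) (hσ : ∀ l, 2 ≤ l → abv (σ l) ≤ 1)
    (b : ℕ → L) (hb0 : b 0 = 1)
    (hb : ∀ j : ℕ,
      b (j + 1)
        = (b j) ^ q
            / (algebraMap (LaurentSeries F) L (Dfac q (xK F) (j + 1)) * Sseq (F := F) q σ (j + 1))) :
    (∀ n, 1 ≤ n →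
        abv (algebraMap (LaurentSeries F) L (Dfac q (xK F) n) * Sseq (F := F) q σ n) = (q : ℝ)⁻¹)
    ∧ ∀ j : ℕ, abv (b j) = (q : ℝ) ^ (((q : ℝ) ^ j - 1) / ((q : ℝ) - 1)) := by
  have hq2 : 2 ≤ q := hq ▸ Fintype.one_lt_card
  have hDS := fun n (hn : 1 ≤ n) => abv_algebraMap_Dfac_mul_Sseq hq2 hext hna hσ1 hσ hn
  exact ⟨hDS, abv_eq_rpow_dfacOrder_of_recurrence hq2 hDS hb0 hb⟩
end
end

section
/- Let e_δ(t) = Σ b_j t^{q^j} with b_0 = 1 be a formal F_q-linear power series, and let log_δ(t) = Σ β_n t^{q^n} be its composition inverse, determined by β_0 = 1 and β_l = -Σ_{m=1}^{l} b_m β_{l-m}^{q^m}. If |b_j| ≤ q^{(q^j-1)/(q-1)} for all j, then |β_j| ≤ q^{(q^j-1)/(q-1)} for all j ≥ 0. -/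
/-! Strong induction on `l`: by the ultrametric inequality, `|β_l|` is bounded by a single term
`|b_m| |β_{l-m}|^{q^m}` of the recursion, and the exponents satisfy
`(q^m - 1)/(q - 1) + q^m (q^{l-m} - 1)/(q - 1) = (q^l - 1)/(q - 1)`. -/

open Finset

/-- For `q = 1` both sides vanish, by the junk value of division by zero. -/
lemma geom_exponent_add (q : ℝ) {m l : ℕ} (hml : m ≤ l) :
    (q ^ m - 1) / (q - 1) + q ^ m * ((q ^ (l - m) - 1) / (q - 1)) = (q ^ l - 1) / (q - 1) := by
  rcases eq_or_ne q 1 with rfl | hq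
  · simp
  have hsub : q - 1 ≠ 0 := sub_ne_zero.mpr hq
  have hpow : q ^ m * q ^ (l - m) = q ^ l := by rw [← pow_add, Nat.add_sub_cancel' hml]
  field_simp
  linear_combination hpow

lemma rpow_geom_exponent_mul_pow {q : ℕ} (hq : 0 < q) {m l : ℕ} (hml : m ≤ l) :
    (q : ℝ) ^ (((q : ℝ) ^ m - 1) / ((q : ℝ) - 1)) *
        ((q : ℝ) ^ (((q : ℝ) ^ (l - m) - 1) / ((q : ℝ) - 1))) ^ q ^ m =
      (q : ℝ) ^ (((q : ℝ) ^ l - 1) / ((q : ℝ) - 1)) := by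
  have hq' : (0 : ℝ) < q := Nat.cast_pos.mpr hq
  rw [← Real.rpow_natCast _ (q ^ m), ← Real.rpow_mul hq'.le, ← Real.rpow_add hq', Nat.cast_pow,
    mul_comm _ ((q : ℝ) ^ m), geom_exponent_add _ hml]

theorem abv_le_of_inverse_recursion {L : Type*} [Ring L] [Nontrivial L]
    (abv : AbsoluteValue L ℝ) (hna : IsNonarchimedean abv) (q : ℕ) (c : ℕ → ℝ)
    (hc0 : 1 ≤ c 0) (hc : ∀ l, ∀ m ∈ Icc 1 l, c m * c (l - m) ^ q ^ m ≤ c l)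
    (b β : ℕ → L) (hb : ∀ j, 1 ≤ j → abv (b j) ≤ c j) (hβ0 : β 0 = 1)
    (hβ : ∀ l, 1 ≤ l → β l = -∑ m ∈ Icc 1 l, b m * β (l - m) ^ q ^ m) :
    ∀ j, abv (β j) ≤ c j := by
  intro l
  induction l using Nat.strong_induction_on with
  | _ l ih =>
    rcases Nat.eq_zero_or_pos l with rfl | hl
    · simpa [hβ0] using hc0
    obtain ⟨m, hm, hle⟩ :=
      hna.finset_image_add_of_nonempty (fun m ↦ b m * β (l - m) ^ q ^ m) (t := Icc 1 l)
        (nonempty_Icc.mpr hl)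
    have ⟨hm1, hml⟩ := mem_Icc.mp hm
    have hβ_le := ih (l - m) (by omega)
    calc abv (β l) ≤ abv (b m * β (l - m) ^ q ^ m) := by rwa [hβ l hl, abv.map_neg]
      _ = abv (b m) * abv (β (l - m)) ^ q ^ m := by rw [abv.map_mul, abv.map_pow]
      _ ≤ c m * c (l - m) ^ q ^ m :=
        mul_le_mul (hb m hm1) (pow_le_pow_left₀ (abv.nonneg _) hβ_le _) (by positivity)
          ((abv.nonneg _).trans (hb m hm1))
      _ ≤ c l := hc l m hm

theorem log_coefficients_bound_general {F L : Type*} [Field F] [Fintype F] [Field L]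
    (q : ℕ) (hq : q = Fintype.card F)
    (abv : AbsoluteValue L ℝ)
    (hna : ∀ a b : L, abv (a + b) ≤ max (abv a) (abv b))
    (b β : ℕ → L)
    (hb : ∀ j : ℕ, abv (b j) ≤ (q : ℝ) ^ (((q : ℝ) ^ j - 1) / ((q : ℝ) - 1)))
    (hβ0 : β 0 = 1)
    (hβ : ∀ l, 1 ≤ l → β l = -∑ m ∈ Finset.Icc 1 l, b m * (β (l - m)) ^ q ^ m) :
    ∀ j : ℕ, abv (β j) ≤ (q : ℝ) ^ (((q : ℝ) ^ j - 1) / ((q : ℝ) - 1)) := by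
  have hq_pos : 0 < q := hq ▸ Fintype.card_pos
  refine abv_le_of_inverse_recursion abv hna q _ (by simp) (fun l m hm ↦ ?_) b β
    (fun j _ ↦ hb j) hβ0 hβ
  exact (rpow_geom_exponent_mul_pow hq_pos (mem_Icc.mp hm).2).le

/-- If `log_δ(t) = Σ β_n t^{q^n}` is the composition inverse of the formal `F_q`-linear power
series `e_δ(t) = Σ b_j t^{q^j}` (`b_0 = 1`), so that `β_0 = 1` and
`β_l = -Σ_{m=1}^{l} b_m β_{l-m}^{q^m}`, and if `|b_j| ≤ q^{(q^j-1)/(q-1)}` for all `j`, then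
`|β_j| ≤ q^{(q^j-1)/(q-1)}` for all `j ≥ 0`.  Here the coefficients lie in a field `L`
(such as `K̄_c`) with a nonarchimedean absolute value `abv`, and `q` is the cardinality of the
underlying finite field. -/
theorem log_coefficients_bound {F L : Type*} [Field F] [Fintype F] [Field L]
    (q : ℕ) (hq : q = Fintype.card F)
    (abv : AbsoluteValue L ℝ)
    (hna : ∀ a b : L, abv (a + b) ≤ max (abv a) (abv b))
    (b β : ℕ → L) (hb0 : b 0 = 1)
    (hb : ∀ j : ℕ, abv (b j) ≤ (q : ℝ) ^ (((q : ℝ) ^ j - 1) / ((q : ℝ) - 1)))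
    (hβ0 : β 0 = 1)
    (hβ : ∀ l, 1 ≤ l → β l = -∑ m ∈ Finset.Icc 1 l, b m * (β (l - m)) ^ q ^ m) :
    ∀ j : ℕ, abv (β j) ≤ (q : ℝ) ^ (((q : ℝ) ^ j - 1) / ((q : ℝ) - 1)) :=
  log_coefficients_bound_general q hq abv hna b β hb hβ0 hβ
end
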